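/- arXiv:1501.04755 — 5 statements merged into one kernel-verified Lean document; each statement's English description precedes it below -/
import Mathlib

section
/- Let a ∈ ℝ^p with a_+ ≠ 0, where (a_+)_j = max(a_j, 0), and let 1 ≤ s ≤ √p. Suppose Δ ≥ 0 is such that S(a_+, Δ) ≠ 0 and the vector w = S(a_+, Δ)/‖S(a_+, Δ)‖_{ℓ²} satisfies either (i) Δ = 0 and ‖w‖_{ℓ¹} ≤ s, or (ii) Δ > 0 and ‖w‖_{ℓ¹} = s. Then w maximizes ⟨w', a⟩ over all w' ∈ ℝ^p satisfying ‖w'‖_{ℓ²} ≤ 1, ‖w'‖_{ℓ¹} ≤ s, and w'_j ≥ 0 for all j. -/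
/-!
With `S = S(a₊, Δ) = (a - Δ)₊` and `w = S / ‖S‖₂`, the pair `(S, Δ)` is a Lagrange certificate:
`a ≤ S + Δ` componentwise, with equality wherever `S > 0`. Hence for every feasible `w'`,
`⟨w', a⟩ ≤ ⟨w', S⟩ + Δ‖w'‖₁ ≤ ‖S‖₂ + Δ s` by Cauchy–Schwarz, while `⟨w, a⟩ = ‖S‖₂ + Δ‖w‖₁`,
and `Δ‖w‖₁ = Δ s` in both cases (i) and (ii).
-/

open Finset

noncomputable section

/-- The soft thresholding operator `S(x, c) = sign(x)(|x| − c)₊`. -/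
def softThreshold (x c : ℝ) : ℝ := Real.sign x * max (|x| - c) 0

lemma softThreshold_max_zero {x c : ℝ} (hc : 0 ≤ c) :
    softThreshold (max x 0) c = max (x - c) 0 := by
  rcases lt_or_ge 0 x with hx | hx
  · rw [max_eq_left hx.le, softThreshold, abs_of_pos hx, Real.sign_of_pos hx, one_mul]
  · rw [max_eq_right hx, softThreshold, Real.sign_zero, zero_mul, max_eq_right (by linarith)]

lemma max_sub_zero_mul_eq (x c : ℝ) :
    max (x - c) 0 * x = max (x - c) 0 * (max (x - c) 0 + c) := by
  rcases le_total (x - c) 0 with h | h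
  · rw [max_eq_right h]; ring
  · rw [max_eq_left h]; ring

section Certificate

variable {ι : Type*} [Fintype ι]

lemma sum_mul_le_sqrt_sum_sq {f g : ι → ℝ} (hf : √(∑ j, f j ^ 2) ≤ 1) :
    ∑ j, f j * g j ≤ √(∑ j, g j ^ 2) :=
  (Real.sum_mul_le_sqrt_mul_sqrt _ f g).trans <|
    mul_le_of_le_one_left (Real.sqrt_nonneg _) hf

lemma sum_div_sqrt_mul_self (S : ι → ℝ) :
    ∑ j, S j / √(∑ i, S i ^ 2) * S j = √(∑ i, S i ^ 2) := by
  calc ∑ j, S j / √(∑ i, S i ^ 2) * S j = (∑ j, S j ^ 2) / √(∑ i, S i ^ 2) := by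
        rw [sum_div]; exact sum_congr rfl fun j _ => by ring
    _ = √(∑ i, S i ^ 2) := Real.div_sqrt

lemma sum_mul_le_of_le_add {a S w' : ι → ℝ} {Δ s : ℝ} (hΔ : 0 ≤ Δ)
    (hle : ∀ j, a j ≤ S j + Δ) (hw'₀ : ∀ j, 0 ≤ w' j)
    (hw'₂ : √(∑ j, w' j ^ 2) ≤ 1) (hw'₁ : ∑ j, |w' j| ≤ s) :
    ∑ j, w' j * a j ≤ √(∑ j, S j ^ 2) + Δ * s := by
  have hw'₁' : ∑ j, w' j ≤ s := by simpa only [abs_of_nonneg (hw'₀ _)] using hw'₁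
  calc ∑ j, w' j * a j ≤ ∑ j, (w' j * S j + Δ * w' j) :=
        sum_le_sum fun j _ => by nlinarith [mul_le_mul_of_nonneg_left (hle j) (hw'₀ j)]
    _ = ∑ j, w' j * S j + Δ * ∑ j, w' j := by rw [sum_add_distrib, mul_sum]
    _ ≤ √(∑ j, S j ^ 2) + Δ * s :=
        add_le_add (sum_mul_le_sqrt_sum_sq hw'₂) (mul_le_mul_of_nonneg_left hw'₁' hΔ)

lemma sum_div_sqrt_mul_eq {a S : ι → ℝ} {Δ : ℝ} (hS₀ : ∀ j, 0 ≤ S j)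
    (hslack : ∀ j, S j * a j = S j * (S j + Δ)) :
    ∑ j, S j / √(∑ i, S i ^ 2) * a j =
      √(∑ i, S i ^ 2) + Δ * ∑ j, |S j / √(∑ i, S i ^ 2)| := by
  set N := √(∑ i, S i ^ 2)
  calc ∑ j, S j / N * a j = ∑ j, (S j / N * S j + Δ * (S j / N)) :=
        sum_congr rfl fun j _ => by rw [div_mul_eq_mul_div, hslack j]; ring
    _ = N + Δ * ∑ j, |S j / N| := by
        rw [sum_add_distrib, sum_div_sqrt_mul_self,
          sum_congr rfl fun j _ => abs_of_nonneg (div_nonneg (hS₀ j) (Real.sqrt_nonneg _)), mul_sum]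

end Certificate

theorem soft_thresholding_solution_general (p : ℕ) (a : Fin p → ℝ) (s Δ : ℝ)
    (S : Fin p → ℝ) (hS : S = fun j => softThreshold (max (a j) 0) Δ)
    (w : Fin p → ℝ) (hw : w = fun j => S j / Real.sqrt (∑ i, S i ^ 2))
    (hcase : (Δ = 0 ∧ ∑ j, |w j| ≤ s) ∨ (0 < Δ ∧ ∑ j, |w j| = s)) :
    ∀ w' : Fin p → ℝ, Real.sqrt (∑ j, w' j ^ 2) ≤ 1 → (∑ j, |w' j|) ≤ s →
      (∀ j, 0 ≤ w' j) → ∑ j, w' j * a j ≤ ∑ j, w j * a j := by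
  intro w' hw'₂ hw'₁ hw'₀
  have hΔ : 0 ≤ Δ := by rcases hcase with ⟨h, -⟩ | ⟨h, -⟩ <;> linarith
  have hSj : ∀ j, S j = max (a j - Δ) 0 := fun j => by rw [hS]; exact softThreshold_max_zero hΔ
  have hΔs : Δ * s = Δ * ∑ j, |w j| := by
    rcases hcase with ⟨rfl, -⟩ | ⟨-, h⟩
    · simp only [zero_mul]
    · rw [h]
  calc ∑ j, w' j * a j ≤ √(∑ j, S j ^ 2) + Δ * s :=
        sum_mul_le_of_le_add hΔ (fun j => by linarith [hSj j, le_max_left (a j - Δ) 0])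
          hw'₀ hw'₂ hw'₁
    _ = ∑ j, w j * a j := by
        rw [hΔs, hw]
        exact (sum_div_sqrt_mul_eq (fun j => (hSj j).symm ▸ le_max_right _ _)
          (fun j => by rw [hSj j]; exact max_sub_zero_mul_eq _ _)).symm

/-- Witten–Tibshirani: for `1 ≤ s ≤ √p`, the normalized soft-thresholded vector
`w = S(a₊, Δ)/‖S(a₊, Δ)‖_{ℓ²}` (with `Δ = 0` if that yields `‖w‖_{ℓ¹} ≤ s`, and
otherwise `Δ > 0` chosen so that `‖w‖_{ℓ¹} = s`) maximizes `⟨w', a⟩` over all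
`w'` with `‖w'‖_{ℓ²} ≤ 1`, `‖w'‖_{ℓ¹} ≤ s` and `w'_j ≥ 0` for all `j`. -/
theorem soft_thresholding_solution (p : ℕ) (a : Fin p → ℝ) (s Δ : ℝ)
    (hs1 : 1 ≤ s) (hs2 : s ≤ Real.sqrt p) (hΔ : 0 ≤ Δ)
    (haplus : (fun j => max (a j) 0) ≠ (0 : Fin p → ℝ))
    (S : Fin p → ℝ) (hS : S = fun j => softThreshold (max (a j) 0) Δ)
    (hSne : S ≠ (0 : Fin p → ℝ))
    (w : Fin p → ℝ) (hw : w = fun j => S j / Real.sqrt (∑ i, S i ^ 2))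
    (hcase : (Δ = 0 ∧ ∑ j, |w j| ≤ s) ∨ (0 < Δ ∧ ∑ j, |w j| = s)) :
    ∀ w' : Fin p → ℝ, Real.sqrt (∑ j, w' j ^ 2) ≤ 1 → (∑ j, |w' j|) ≤ s →
      (∀ j, 0 ≤ w' j) → ∑ j, w' j * a j ≤ ∑ j, w j * a j :=
  soft_thresholding_solution_general p a s Δ S hS w hw hcase

end
end

section
/- If w ∈ ℝ^p is a maximizer of the hard-thresholding sparse clustering problem, then its support {j : w_j > 0} equals B, the set of indices of the p − m largest entries of b. -/
open scoped Classical
open Finset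

noncomputable section

/-- A vector `w ∈ ℝ^p` is feasible for the hard-thresholding sparse clustering problem
if `‖w‖_{ℓ²} ≤ 1`, `w_j ≥ 0` for all `j`, and exactly `m` of its components are zero. -/
def Feasible (p m : ℕ) (w : Fin p → ℝ) : Prop :=
  Real.sqrt (∑ j, w j ^ 2) ≤ 1 ∧ (∀ j, 0 ≤ w j) ∧
    (Finset.univ.filter (fun j => w j = 0)).card = m

/-- The set `B` of indices of the `p − m` largest entries of `b`; for distinct entries,
`i ∈ B` iff at least `m` entries lie strictly below `b i`, i.e. `b i > b_(m)`. -/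
def Bset (p m : ℕ) (b : Fin p → ℝ) : Finset (Fin p) :=
  Finset.univ.filter (fun i => m ≤ (Finset.univ.filter (fun j => b j < b i)).card)

/-! Exchanging a positive weight on `b i` with a zero weight on a larger `b k` keeps the vector
feasible and gains `w i * (b k - b i) > 0`, so at a maximizer every zero coordinate sits below
every positive one. The `m` zero coordinates therefore lie below each
index of the support, which puts the support inside `B`; both sets have `p - m` elements. -/

section Rank

variable {ι α : Type*} [Fintype ι] [LinearOrder α]

theorem card_filter_lt_lt_card (b : ι → α) (i : ι) : #{j | b j < b i} < Fintype.card ι :=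
  card_lt_univ_of_notMem (x := i) (by simp)

theorem card_filter_lt_lt_card_filter_lt {b : ι → α} {i k : ι} (h : b i < b k) :
    #{j | b j < b i} < #{j | b j < b k} := by
  refine card_lt_card ⟨fun j hj => ?_, fun hsub => ?_⟩
  · simp only [mem_filter, mem_univ, true_and] at hj ⊢
    exact hj.trans h
  · simpa using hsub (by simpa using h : i ∈ ({j | b j < b k} : Finset ι))

theorem injective_card_filter_lt {b : ι → α} (hb : Function.Injective b) :
    Function.Injective fun i => #{j | b j < b i} := by
  intro i k hik
  rcases lt_trichotomy (b i) (b k) with h | h | h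
  · exact absurd hik (card_filter_lt_lt_card_filter_lt h).ne
  · exact hb h
  · exact absurd hik (card_filter_lt_lt_card_filter_lt h).ne'

end Rank

theorem card_Bset_le {p m : ℕ} {b : Fin p → ℝ} (hb : Function.Injective b) :
    #(Bset p m b) ≤ p - m := by
  have hmaps : Set.MapsTo (fun i => #{j | b j < b i}) (Bset p m b) (Ico m p) := by
    intro i hi
    have hlt := card_filter_lt_lt_card b i
    rw [Fintype.card_fin] at hlt
    simp only [Bset, coe_filter, mem_univ, true_and, Set.mem_ofPred_eq] at hi
    simpa using ⟨hi, hlt⟩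
  simpa using card_le_card_of_injOn _ hmaps (injective_card_filter_lt hb).injOn

namespace Feasible

variable {p m : ℕ} {w : Fin p → ℝ}

theorem card_support (hw : Feasible p m w) : #{j | 0 < w j} = p - m := by
  obtain ⟨-, hnonneg, hzeros⟩ := hw
  have hpos : univ.filter (fun j => 0 < w j) = univ.filter (fun j => ¬ w j = 0) :=
    filter_congr fun j _ => (hnonneg j).lt_iff_ne'
  have hsplit := card_filter_add_card_filter_not (s := univ) (fun j => w j = 0)
  rw [card_univ, Fintype.card_fin] at hsplit
  rw [hpos]
  omega

theorem comp_perm (hw : Feasible p m w) (σ : Equiv.Perm (Fin p)) : Feasible p m (w ∘ σ) := by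
  obtain ⟨hnorm, hnonneg, hzeros⟩ := hw
  refine ⟨?_, fun j => hnonneg (σ j), ?_⟩
  · simpa only [Function.comp_apply, Equiv.sum_comp σ fun j => w j ^ 2] using hnorm
  · simpa only [card_filter, Function.comp_apply,
      Equiv.sum_comp σ fun j => if w j = 0 then 1 else 0] using hzeros

end Feasible

theorem sum_comp_swap_mul {ι R : Type*} [Fintype ι] [DecidableEq ι] [CommRing R]
    (w b : ι → R) (i k : ι) :
    ∑ j, w (Equiv.swap i k j) * b j = ∑ j, w j * b j + (w i - w k) * (b k - b i) := by
  rcases eq_or_ne i k with rfl | hik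
  · simp
  have hdiff : ∑ j, (w (Equiv.swap i k j) - w j) * b j = (w i - w k) * (b k - b i) := by
    rw [sum_eq_add_of_mem i k (mem_univ _) (mem_univ _) hik fun j _ hj => by
      simp [Equiv.swap_apply_of_ne_of_ne hj.1 hj.2]]
    simp only [Equiv.swap_apply_left, Equiv.swap_apply_right]
    ring
  simp only [sub_mul, sum_sub_distrib] at hdiff
  linear_combination hdiff

theorem lt_of_maximizer_of_pos_of_eq_zero {p m : ℕ} {b w : Fin p → ℝ} (hb : Function.Injective b)
    (hw : Feasible p m w)
    (hmax : ∀ w' : Fin p → ℝ, Feasible p m w' → ∑ j, w' j * b j ≤ ∑ j, w j * b j)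
    {i k : Fin p} (hi : 0 < w i) (hk : w k = 0) : b k < b i := by
  have hki : k ≠ i := by rintro rfl; exact hi.ne' hk
  by_contra! hle
  have hgain : 0 < w i * (b k - b i) :=
    mul_pos hi (sub_pos.2 (hle.lt_of_ne (hb.ne hki).symm))
  have := hmax _ (hw.comp_perm (Equiv.swap i k))
  rw [Function.comp_def, sum_comp_swap_mul, hk, sub_zero] at this
  linarith

theorem maximizer_support_eq_Bset_general (p m : ℕ) (b : Fin p → ℝ)
    (hinj : Function.Injective b)
    (w : Fin p → ℝ) (hw : Feasible p m w)
    (hmax : ∀ w' : Fin p → ℝ, Feasible p m w' → ∑ j, w' j * b j ≤ ∑ j, w j * b j) :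
    Finset.univ.filter (fun j => 0 < w j) = Bset p m b := by
  have hsupport : Finset.univ.filter (fun j => 0 < w j) ⊆ Bset p m b := by
    intro i hi
    rw [mem_filter] at hi
    have hzeros : univ.filter (fun j => w j = 0) ⊆ univ.filter (fun j => b j < b i) := by
      intro k hk
      rw [mem_filter] at hk ⊢
      exact ⟨mem_univ k, lt_of_maximizer_of_pos_of_eq_zero hinj hw hmax hi.2 hk.2⟩
    simpa [Bset, hw.2.2] using card_le_card hzeros
  exact eq_of_subset_of_card_le hsupport (hw.card_support ▸ card_Bset_le hinj)

/-- If `w` is a maximizer of the hard-thresholding sparse clustering problem, then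
its support `{j : w_j > 0}` equals `B`, the set of indices of the `p − m` largest
entries of `b`. -/
theorem maximizer_support_eq_Bset (p m : ℕ) (b : Fin p → ℝ)
    (hb : ∀ i, 0 < b i) (hinj : Function.Injective b) (hm : m < p)
    (w : Fin p → ℝ) (hw : Feasible p m w)
    (hmax : ∀ w' : Fin p → ℝ, Feasible p m w' → ∑ j, w' j * b j ≤ ∑ j, w j * b j) :
    Finset.univ.filter (fun j => 0 < w j) = Bset p m b :=
  maximizer_support_eq_Bset_general p m b hinj w hw hmax
end
end

section
/- The maximum value of ⟨w, b⟩ over all feasible vectors of the hard-thresholding sparse clustering problem equals (∑_{j∈B} b_j²)^{1/2}, and it is attained at w*. -/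
open scoped Classical
open Finset

noncomputable section

/-- The candidate optimal weight vector `w*`. -/
def wstar (p m : ℕ) (b : Fin p → ℝ) : Fin p → ℝ :=
  fun i => if i ∈ Bset p m b then b i / Real.sqrt (∑ j ∈ Bset p m b, b j ^ 2) else 0

/-! Every feasible `w` is supported on a set `S` of exactly `p − m` indices, so by Cauchy–Schwarz
`⟨w, b⟩ ≤ ‖w‖ · (∑_{j∈S} b_j²)^{1/2} ≤ (∑_{j∈S} b_j²)^{1/2}`. Among all index sets of size `p − m`,
the sum of squares of the positive entries of `b` is largest on `B`: exchanging an index of `S \ B`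
for one of `B \ S` can only increase it, because every entry outside `B` is smaller than every entry
in `B`. Finally `w*` is `b` restricted to `B` and normalised, which attains the bound. -/

theorem Finset.sum_le_sum_of_card_eq_of_forall_sdiff_le {ι M : Type*} [DecidableEq ι]
    [AddCommMonoid M] [LinearOrder M] [IsOrderedCancelAddMonoid M] {s t : Finset ι} {f : ι → M}
    (hst : #s = #t) (h : ∀ i ∈ s \ t, ∀ j ∈ t \ s, f i ≤ f j) :
    ∑ i ∈ s, f i ≤ ∑ i ∈ t, f i := by
  have hcard : #(s \ t) = #(t \ s) := card_sdiff_comm hst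
  rw [← sum_sdiff_le_sum_sdiff]
  rcases (t \ s).eq_empty_or_nonempty with hempty | hne
  · rw [hempty, card_empty, card_eq_zero] at hcard
    rw [hempty, hcard]
  · obtain ⟨j₀, hj₀, hmin⟩ := exists_min_image (t \ s) f hne
    calc ∑ i ∈ s \ t, f i ≤ #(s \ t) • f j₀ := sum_le_card_nsmul _ _ _ fun i hi => h i hi j₀ hj₀
      _ = #(t \ s) • f j₀ := by rw [hcard]
      _ ≤ ∑ j ∈ t \ s, f j := card_nsmul_le_sum _ _ _ hmin

theorem sum_mul_le_sqrt_mul_sqrt_support {ι : Type*} [Fintype ι] (w b : ι → ℝ) :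
    ∑ j, w j * b j ≤ √(∑ j, w j ^ 2) * √(∑ j ∈ {j | w j ≠ 0}, b j ^ 2) := by
  calc ∑ j, w j * b j = ∑ j ∈ {j | w j ≠ 0}, w j * b j := by
        rw [sum_filter_of_ne]; intro j _ h hw; simp [hw] at h
    _ ≤ √(∑ j ∈ {j | w j ≠ 0}, w j ^ 2) * √(∑ j ∈ {j | w j ≠ 0}, b j ^ 2) :=
        Real.sum_mul_le_sqrt_mul_sqrt _ _ _
    _ = √(∑ j, w j ^ 2) * √(∑ j ∈ {j | w j ≠ 0}, b j ^ 2) := by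
        rw [sum_filter_of_ne]; intro j _ h hw; simp [hw] at h

section Rank

variable {ι α : Type*} [Fintype ι] [LinearOrder α] (b : ι → α)

def rank (i : ι) : ℕ := #{j | b j < b i}

variable {b}

theorem rank_le_rank {i j : ι} (h : b i ≤ b j) : rank b i ≤ rank b j :=
  card_le_card fun k hk => by simp only [mem_filter, mem_univ, true_and] at hk ⊢; exact hk.trans_le h

theorem rank_lt_rank {i j : ι} (h : b i < b j) : rank b i < rank b j :=
  card_lt_card ⟨fun k hk => by simp only [mem_filter, mem_univ, true_and] at hk ⊢; exact hk.trans h,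
    fun hsub => lt_irrefl (b i) (mem_filter.1 (hsub (mem_filter.2 ⟨mem_univ i, h⟩))).2⟩

theorem lt_of_rank_lt_rank {i j : ι} (h : rank b i < rank b j) : b i < b j := by
  contrapose! h
  exact rank_le_rank h

theorem rank_lt_card (i : ι) : rank b i < Fintype.card ι :=
  card_lt_univ_of_notMem (x := i) (by simp)

theorem rank_injective (hb : Function.Injective b) : Function.Injective (rank b) := by
  intro i j h
  by_contra hij
  rcases (hb.ne hij).lt_or_gt with hlt | hlt
  · exact (rank_lt_rank hlt).ne h
  · exact (rank_lt_rank hlt).ne' h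

theorem image_rank (hb : Function.Injective b) : univ.image (rank b) = range (Fintype.card ι) := by
  refine eq_of_subset_of_card_le (fun k hk => ?_) ?_
  · obtain ⟨i, -, rfl⟩ := mem_image.1 hk
    exact mem_range.2 (rank_lt_card i)
  · rw [card_range, card_image_of_injective _ (rank_injective hb), card_univ]

theorem card_filter_le_rank_eq (hb : Function.Injective b) (m : ℕ) :
    #{i | m ≤ rank b i} = Fintype.card ι - m := by
  rw [← card_image_of_injective _ (rank_injective hb), ← filter_image, image_rank hb,
    ← Nat.card_Ico]
  congr 1
  ext k
  simp only [mem_filter, mem_range, mem_Ico]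
  omega

end Rank

section Sparse

variable {p m : ℕ} {b : Fin p → ℝ}

theorem mem_Bset_iff {i : Fin p} : i ∈ Bset p m b ↔ m ≤ rank b i := by
  simp [Bset, rank]

theorem card_Bset (hinj : Function.Injective b) : #(Bset p m b) = p - m := by
  change #{i | m ≤ rank b i} = p - m
  rw [card_filter_le_rank_eq hinj, Fintype.card_fin]

theorem lt_of_notMem_Bset_of_mem_Bset {i j : Fin p} (hi : i ∉ Bset p m b) (hj : j ∈ Bset p m b) :
    b i < b j := by
  rw [mem_Bset_iff] at hi hj
  exact lt_of_rank_lt_rank (by omega)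

theorem sum_sq_le_sum_sq_Bset (hb : ∀ i, 0 ≤ b i) (hinj : Function.Injective b)
    {S : Finset (Fin p)} (hS : #S = p - m) : ∑ j ∈ S, b j ^ 2 ≤ ∑ j ∈ Bset p m b, b j ^ 2 :=
  sum_le_sum_of_card_eq_of_forall_sdiff_le (hS.trans (card_Bset hinj).symm) fun i hi _ hj =>
    pow_le_pow_left₀ (hb i)
      (lt_of_notMem_Bset_of_mem_Bset (mem_sdiff.1 hi).2 (mem_sdiff.1 hj).1).le 2

theorem wstar_eq_zero_iff (hb : ∀ i, 0 < b i) {i : Fin p} : wstar p m b i = 0 ↔ i ∉ Bset p m b := by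
  by_cases hi : i ∈ Bset p m b
  · have hs : 0 < √(∑ j ∈ Bset p m b, b j ^ 2) :=
      Real.sqrt_pos.2 (sum_pos' (fun j _ => sq_nonneg (b j)) ⟨i, hi, pow_pos (hb i) 2⟩)
    simp [wstar, hi, (hb i).ne', hs.ne']
  · simp [wstar, hi]

theorem sum_wstar_mul : ∑ j, wstar p m b j * b j = √(∑ j ∈ Bset p m b, b j ^ 2) := by
  simp only [wstar, ite_mul, zero_mul, sum_ite_mem, univ_inter]
  conv_rhs => rw [← Real.div_sqrt, sum_div]
  exact sum_congr rfl fun j _ => by ring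

theorem sum_wstar_sq_le_one : ∑ j, wstar p m b j ^ 2 ≤ 1 := by
  simp only [wstar, ite_pow, zero_pow two_ne_zero, div_pow, sum_ite_mem, univ_inter]
  rw [← sum_div, Real.sq_sqrt (sum_nonneg fun j _ => sq_nonneg (b j))]
  exact div_self_le_one _

theorem feasible_wstar (hb : ∀ i, 0 < b i) (hinj : Function.Injective b) (hm : m ≤ p) :
    Feasible p m (wstar p m b) := by
  refine ⟨Real.sqrt_le_one.2 sum_wstar_sq_le_one, fun j => ?_, ?_⟩
  · unfold wstar
    split_ifs
    · exact div_nonneg (hb j).le (Real.sqrt_nonneg _)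
    · exact le_rfl
  · have hzeros : ({j | wstar p m b j = 0} : Finset (Fin p)) = (Bset p m b)ᶜ := by
      ext j
      simp [wstar_eq_zero_iff hb]
    rw [hzeros, card_compl, card_Bset hinj, Fintype.card_fin]
    omega

theorem sum_mul_le_of_feasible (hb : ∀ i, 0 ≤ b i) (hinj : Function.Injective b)
    {w : Fin p → ℝ} (hw : Feasible p m w) :
    ∑ j, w j * b j ≤ √(∑ j ∈ Bset p m b, b j ^ 2) := by
  obtain ⟨hnorm, -, hzeros⟩ := hw
  have hsupport : #({j | w j ≠ 0} : Finset (Fin p)) = p - m := by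
    have := card_filter_add_card_filter_not (s := univ) (p := fun j => w j = 0)
    rw [card_univ, Fintype.card_fin, hzeros] at this
    simp only [ne_eq]
    omega
  calc ∑ j, w j * b j ≤ √(∑ j, w j ^ 2) * √(∑ j ∈ {j | w j ≠ 0}, b j ^ 2) :=
        sum_mul_le_sqrt_mul_sqrt_support w b
    _ ≤ 1 * √(∑ j ∈ Bset p m b, b j ^ 2) :=
        mul_le_mul hnorm (Real.sqrt_le_sqrt (sum_sq_le_sum_sq_Bset hb hinj hsupport))
          (Real.sqrt_nonneg _) zero_le_one
    _ = √(∑ j ∈ Bset p m b, b j ^ 2) := one_mul _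

end Sparse

/-- The maximum of `⟨w, b⟩` over all feasible vectors of the hard-thresholding sparse
clustering problem equals `(∑_{j∈B} b_j²)^{1/2}`, and it is attained at `w*`. -/
theorem max_value_attained_at_wstar (p m : ℕ) (b : Fin p → ℝ)
    (hb : ∀ i, 0 < b i) (hinj : Function.Injective b) (hm : m < p) :
    Feasible p m (wstar p m b) ∧
    (∑ j, wstar p m b j * b j = Real.sqrt (∑ j ∈ Bset p m b, b j ^ 2)) ∧
    ∀ w : Fin p → ℝ, Feasible p m w →
      ∑ j, w j * b j ≤ Real.sqrt (∑ j ∈ Bset p m b, b j ^ 2) :=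
  ⟨feasible_wstar hb hinj hm.le, sum_wstar_mul,
    fun _ hw => sum_mul_le_of_feasible (fun i => (hb i).le) hinj hw⟩
end
end

section
/- Let g be feasible for the functional sparse clustering problem. Suppose Γ̃ ⊆ D∖B is measurable with μ(Γ̃) > 0 and ∫_{Γ̃} g dμ > 0, and suppose τ ∈ ℝ is such that Γ̃ + τ ⊆ B and g = 0 μ-a.e. on Γ̃ + τ. Define g̃ by g̃(x) = 0 for x ∈ Γ̃, g̃(x) = g(x − τ) for x ∈ Γ̃ + τ, and g̃(x) = g(x) for all other x ∈ D. Then g̃ is feasible and ∫_D g̃ b dμ > ∫_D g b dμ. -/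
open MeasureTheory
open scoped ENNReal Classical

noncomputable section

/-- A function `w` is feasible for the functional sparse clustering problem on `D` if
`w ∈ L²(D)`, `‖w‖_{L²(D)} ≤ 1`, `w ≥ 0` μ-a.e. on `D`, and `μ({x ∈ D : w(x) = 0}) ≥ m`. -/
def FeasibleF (D : Set ℝ) (m : ℝ) (w : ℝ → ℝ) : Prop :=
  MemLp w 2 (volume.restrict D) ∧
  (∫ x in D, (w x) ^ 2) ≤ 1 ∧
  (∀ᵐ x ∂(volume.restrict D), 0 ≤ w x) ∧
  ENNReal.ofReal m ≤ volume {x ∈ D | w x = 0}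

/-- The set `B = {x ∈ D : b(x) > k}`. -/
def Bf (D : Set ℝ) (b : ℝ → ℝ) (k : ℝ) : Set ℝ := {x ∈ D | k < b x}

/-! Let `σ` be the involution of `ℝ` that exchanges `Γ̃` and `Γ̃ + τ` by translation and fixes
every other point. It preserves Lebesgue measure and maps `D` onto itself, and since `g = 0` a.e.
on `Γ̃ + τ`, we have `g̃ = g ∘ σ` a.e. on `D`; so the `L²` norm, the sign and the measure of the
zero set of `g̃` are those of `g`. Because `σ` is an involution, `∫_D g̃ b = ∫_D g (b ∘ σ)`, and
`g (b ∘ σ - b)` vanishes a.e. off `Γ̃`, where it equals `g(x) (b(x + τ) - b(x))` with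
`b(x) ≤ k < b(x + τ)`. As `g ≥ 0` has positive mass on `Γ̃`, the objective strictly increases. -/

theorem MeasureTheory.MeasurePreserving.integral_comp_mul_of_involutive {α : Type*}
    [MeasurableSpace α] {ν : Measure α} {σ : α ≃ᵐ α} (hσ : MeasurePreserving σ ν ν)
    (hinv : Function.Involutive σ) (f b : α → ℝ) :
    ∫ x, f (σ x) * b x ∂ν = ∫ x, f x * b (σ x) ∂ν := by
  rw [← hσ.integral_comp' (fun y => f y * b (σ y))]
  simp only [hinv _]

theorem MeasureTheory.setIntegral_mul_pos {α : Type*} [MeasurableSpace α] {μ : Measure α}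
    {s : Set α} {f c : α → ℝ} (hs : MeasurableSet s) (hf : ∀ᵐ x ∂μ.restrict s, 0 ≤ f x)
    (hpos : 0 < ∫ x in s, f x ∂μ) (hc : ∀ x ∈ s, 0 < c x)
    (hfc : IntegrableOn (fun x => f x * c x) s μ) : 0 < ∫ x in s, f x * c x ∂μ := by
  have hfc_nonneg : ∀ᵐ x ∂μ.restrict s, 0 ≤ f x * c x := by
    filter_upwards [hf, ae_restrict_mem hs] with x hfx hx
    exact mul_nonneg hfx (hc x hx).le
  rw [integral_pos_iff_support_of_nonneg_ae hf (Integrable.of_integral_ne_zero hpos.ne')] at hpos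
  rw [integral_pos_iff_support_of_nonneg_ae hfc_nonneg hfc]
  refine hpos.trans_le ?_
  rw [Measure.restrict_apply' hs, Measure.restrict_apply' hs]
  exact measure_mono fun x ⟨hfx, hx⟩ => ⟨mul_ne_zero hfx (hc x hx).ne', hx⟩

theorem MeasureTheory.Measure.measure_sep_eq_restrict_setOf {α : Type*} [MeasurableSpace α]
    (μ : Measure α) {D : Set α} (hD : MeasurableSet D) (p : α → Prop) :
    μ {x ∈ D | p x} = μ.restrict D {x | p x} := by
  rw [Measure.restrict_apply' hD, Set.inter_comm]
  rfl

namespace MeasurableEquiv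

variable {α : Type*} [MeasurableSpace α] {e : α ≃ᵐ α} {s : Set α}

variable (e s) in
def swapImage (x : α) : α :=
  if x ∈ s then e x else if x ∈ e '' s then e.symm x else x

theorem swapImage_of_mem {x : α} (hx : x ∈ s) : swapImage e s x = e x := if_pos hx

theorem swapImage_of_mem_image (hd : Disjoint s (e '' s)) {x : α} (hx : x ∈ e '' s) :
    swapImage e s x = e.symm x := by
  rw [swapImage, if_neg (Set.disjoint_right.1 hd hx), if_pos hx]

theorem swapImage_of_notMem {x : α} (hs : x ∉ s) (hes : x ∉ e '' s) : swapImage e s x = x := by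
  rw [swapImage, if_neg hs, if_neg hes]

theorem swapImage_involutive (hd : Disjoint s (e '' s)) : Function.Involutive (swapImage e s) := by
  intro x
  by_cases hs : x ∈ s
  · rw [swapImage_of_mem hs, swapImage_of_mem_image hd (Set.mem_image_of_mem e hs),
      symm_apply_apply]
  by_cases hes : x ∈ e '' s
  · obtain ⟨y, hy, rfl⟩ := hes
    rw [swapImage_of_mem_image hd (Set.mem_image_of_mem e hy), symm_apply_apply,
      swapImage_of_mem hy]
  · rw [swapImage_of_notMem hs hes, swapImage_of_notMem hs hes]

theorem measurable_swapImage (hs : MeasurableSet s) : Measurable (swapImage e s) :=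
  Measurable.ite hs e.measurable
    (Measurable.ite (e.measurableSet_image.2 hs) e.symm.measurable measurable_id)

theorem swapImage_preimage_of_subset {t : Set α} (hst : s ⊆ t) (hest : e '' s ⊆ t) :
    swapImage e s ⁻¹' t = t := by
  ext x
  simp only [Set.mem_preimage, swapImage]
  split_ifs with hs hes
  · exact iff_of_true (hest (Set.mem_image_of_mem e hs)) (hst hs)
  · obtain ⟨y, hy, rfl⟩ := hes
    exact iff_of_true (by simpa using hst hy) (hest (Set.mem_image_of_mem e hy))
  · exact Iff.rfl

def swapImageEquiv (hs : MeasurableSet s) (hd : Disjoint s (e '' s)) : α ≃ᵐ α where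
  toEquiv := (swapImage_involutive hd).toPerm
  measurable_toFun := measurable_swapImage hs
  measurable_invFun := measurable_swapImage hs

variable {μ : Measure α}

theorem measurePreserving_swapImage (hs : MeasurableSet s) (hd : Disjoint s (e '' s))
    (he : MeasurePreserving e μ μ) : MeasurePreserving (swapImage e s) μ μ := by
  have hes : MeasurableSet (e '' s) := e.measurableSet_image.2 hs
  have hσ := measurable_swapImage (e := e) hs
  have hs_map : (μ.restrict s).map (swapImage e s) = μ.restrict (e '' s) := by
    rw [Measure.map_congr (g := e) ((ae_restrict_mem hs).mono fun x hx => swapImage_of_mem hx)]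
    exact (he.restrict_image_emb e.measurableEmbedding s).map_eq
  have hes_map : (μ.restrict (e '' s)).map (swapImage e s) = μ.restrict s := by
    rw [Measure.map_congr (g := e.symm)
      ((ae_restrict_mem hes).mono fun x hx => swapImage_of_mem_image hd hx)]
    have h := ((he.symm e).restrict_image_emb e.symm.measurableEmbedding (e '' s)).map_eq
    rwa [show e.symm '' (e '' s) = s from e.toEquiv.symm_image_image s] at h
  have hrest_map :
      (μ.restrict (s ∪ e '' s)ᶜ).map (swapImage e s) = μ.restrict (s ∪ e '' s)ᶜ := by
    rw [Measure.map_congr (f := swapImage e s) (g := id)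
      ((ae_restrict_mem (hs.union hes).compl).mono fun x hx =>
        swapImage_of_notMem (fun h => hx (Or.inl h)) (fun h => hx (Or.inr h))), Measure.map_id]
  refine ⟨hσ, ?_⟩
  conv_lhs => rw [← Measure.restrict_add_restrict_compl (μ := μ) (hs.union hes),
    Measure.restrict_union hd hes]
  rw [Measure.map_add _ _ hσ, Measure.map_add _ _ hσ, hs_map, hes_map, hrest_map,
    add_comm (μ.restrict (e '' s)), ← Measure.restrict_union hd hes,
    Measure.restrict_add_restrict_compl (hs.union hes)]

theorem measurePreserving_swapImage_restrict (hs : MeasurableSet s) (hd : Disjoint s (e '' s))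
    (he : MeasurePreserving e μ μ) {t : Set α} (ht : MeasurableSet t) (hst : s ⊆ t)
    (hest : e '' s ⊆ t) : MeasurePreserving (swapImage e s) (μ.restrict t) (μ.restrict t) := by
  have h := (measurePreserving_swapImage hs hd he).restrict_preimage ht
  rwa [swapImage_preimage_of_subset hst hest] at h

theorem setIntegral_mul_comp_swapImage (hs : MeasurableSet s) {t : Set α} (hst : s ⊆ t)
    {g b : α → ℝ} (hg : ∀ᵐ x ∂μ.restrict (e '' s), g x = 0)
    (hgb : IntegrableOn (fun x => g x * b x) t μ)
    (hgbσ : IntegrableOn (fun x => g x * b (swapImage e s x)) t μ) :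
    ∫ x in t, g x * b (swapImage e s x) ∂μ =
      ∫ x in t, g x * b x ∂μ + ∫ x in s, g x * (b (e x) - b x) ∂μ := by
  have hg' : ∀ᵐ x ∂μ, x ∈ e '' s → g x = 0 :=
    (ae_restrict_iff' (e.measurableSet_image.2 hs)).1 hg
  have hdiff : (fun x => g x * b (swapImage e s x) - g x * b x) =ᵐ[μ.restrict t]
      s.indicator (fun x => g x * (b (e x) - b x)) := by
    filter_upwards [ae_restrict_of_ae hg'] with x hx
    by_cases hxs : x ∈ s
    · rw [Set.indicator_of_mem hxs, swapImage_of_mem hxs]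
      ring
    by_cases hxes : x ∈ e '' s
    · simp [hx hxes, Set.indicator_of_notMem hxs]
    · rw [Set.indicator_of_notMem hxs, swapImage_of_notMem hxs hxes, sub_self]
  rw [← sub_eq_iff_eq_add', ← integral_sub hgbσ hgb, integral_congr_ae hdiff,
    setIntegral_indicator hs, Set.inter_eq_right.2 hst]

theorem setIntegral_mul_lt_setIntegral_comp_swapImage_mul (hs : MeasurableSet s)
    (hd : Disjoint s (e '' s)) (he : MeasurePreserving e μ μ) {t : Set α} (ht : MeasurableSet t)
    (hst : s ⊆ t) (hest : e '' s ⊆ t) {g b : α → ℝ} (hg0 : ∀ᵐ x ∂μ.restrict (e '' s), g x = 0)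
    (hg : IntegrableOn g t μ) (hb : MemLp b ∞ (μ.restrict t))
    (hg_nonneg : ∀ᵐ x ∂μ.restrict s, 0 ≤ g x) (hpos : 0 < ∫ x in s, g x ∂μ)
    (hgap : ∀ x ∈ s, b x < b (e x)) :
    ∫ x in t, g x * b x ∂μ < ∫ x in t, g (swapImage e s x) * b x ∂μ := by
  have hσ := measurePreserving_swapImage_restrict hs hd he ht hst hest
  have hgb : IntegrableOn (fun x => g x * b x) t μ := hg.mul_of_top_left hb
  have hgbσ : IntegrableOn (fun x => g x * b (swapImage e s x)) t μ :=
    hg.mul_of_top_left (hb.comp_measurePreserving hσ)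
  have hgap_int : IntegrableOn (fun x => g x * (b (e x) - b x)) s μ :=
    ((hgbσ.sub hgb).mono_set hst).congr_fun (fun x hx => by
      simp only [Pi.sub_apply, swapImage_of_mem hx]; ring) hs
  calc ∫ x in t, g x * b x ∂μ
      < (∫ x in t, g x * b x ∂μ) + ∫ x in s, g x * (b (e x) - b x) ∂μ :=
        lt_add_of_pos_right _ (setIntegral_mul_pos hs hg_nonneg hpos
          (fun x hx => sub_pos.2 (hgap x hx)) hgap_int)
    _ = ∫ x in t, g x * b (swapImage e s x) ∂μ :=
        (setIntegral_mul_comp_swapImage hs hst hg0 hgb hgbσ).symm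
    _ = ∫ x in t, g (swapImage e s x) * b x ∂μ :=
        (MeasurePreserving.integral_comp_mul_of_involutive (σ := swapImageEquiv hs hd) hσ
          (swapImage_involutive hd) g b).symm

theorem ae_eq_comp_swapImage_addRight {G β : Type*} [AddGroup G] [MeasurableSpace G]
    [MeasurableAdd G] {μ : Measure G} [μ.IsAddRightInvariant] [Zero β] {s : Set G}
    (hs : MeasurableSet s) {τ : G} {g : G → β}
    (hg0 : ∀ᵐ x ∂μ.restrict ((fun x => x + τ) '' s), g x = 0) :
    (fun x => if x ∈ s then 0 else if x ∈ (fun y => y + τ) '' s then g (x - τ) else g x)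
      =ᵐ[μ] g ∘ swapImage (addRight τ) s := by
  have he : MeasurePreserving (addRight τ) μ μ := measurePreserving_add_right μ τ
  have hg0' : ∀ᵐ x ∂μ.restrict s, g (x + τ) = 0 :=
    (he.restrict_image_emb (addRight τ).measurableEmbedding s).quasiMeasurePreserving
      |>.tendsto_ae.eventually hg0
  filter_upwards [(ae_restrict_iff' hs).1 hg0'] with x hx
  by_cases hxs : x ∈ s
  · simp only [if_pos hxs, Function.comp_apply, swapImage_of_mem hxs, coe_addRight, hx hxs]
  · simp [swapImage, hxs, sub_eq_add_neg, apply_ite g]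

end MeasurableEquiv

namespace FeasibleF

variable {D : Set ℝ} {m : ℝ} {f f' : ℝ → ℝ}

theorem congr_ae (hD : MeasurableSet D) (hf : FeasibleF D m f)
    (h : f =ᵐ[volume.restrict D] f') : FeasibleF D m f' := by
  obtain ⟨hL2, hnorm, hnonneg, hzero⟩ := hf
  refine ⟨hL2.ae_eq h, ?_, ?_, ?_⟩
  · have hsq_ae : (fun x => f x ^ 2) =ᵐ[volume.restrict D] fun x => f' x ^ 2 :=
      h.fun_comp (· ^ 2)
    rwa [← integral_congr_ae hsq_ae]
  · filter_upwards [hnonneg, h] with x hx hfx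
    rwa [← hfx]
  · rw [Measure.measure_sep_eq_restrict_setOf _ hD] at hzero ⊢
    have hzero_ae : {x | f x = 0} =ᵐ[volume.restrict D] {x | f' x = 0} := h.fun_comp (· = 0)
    rwa [← measure_congr hzero_ae]

theorem comp_measurePreserving (hf : FeasibleF D m f) (hD : MeasurableSet D) {σ : ℝ ≃ᵐ ℝ}
    (hσ : MeasurePreserving σ (volume.restrict D) (volume.restrict D)) :
    FeasibleF D m (f ∘ σ) := by
  obtain ⟨hL2, hnorm, hnonneg, hzero⟩ := hf
  refine ⟨hL2.comp_measurePreserving hσ, ?_,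
    hσ.quasiMeasurePreserving.tendsto_ae.eventually hnonneg, ?_⟩
  · rwa [Function.comp_def, hσ.integral_comp' (fun y => f y ^ 2)]
  · rw [Measure.measure_sep_eq_restrict_setOf _ hD] at hzero ⊢
    rwa [← hσ.measure_preimage_equiv] at hzero

end FeasibleF

open MeasurableEquiv in
theorem translate_increases_objective_general (D : Set ℝ) (hD : IsCompact D) (m : ℝ) (b : ℝ → ℝ)
    (hb : ContinuousOn b D)
    (k : ℝ)
    (g : ℝ → ℝ) (hg : FeasibleF D m g)
    (Γ : Set ℝ) (hΓmeas : MeasurableSet Γ) (hΓsub : Γ ⊆ D \ Bf D b k)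
    (hgint : 0 < ∫ x in Γ, g x)
    (τ : ℝ) (hτ : (fun x => x + τ) '' Γ ⊆ Bf D b k)
    (hgz : ∀ᵐ x ∂(volume.restrict ((fun x => x + τ) '' Γ)), g x = 0)
    (gt : ℝ → ℝ)
    (hgt : gt = fun x => if x ∈ Γ then 0
      else if x ∈ (fun y => y + τ) '' Γ then g (x - τ) else g x) :
    FeasibleF D m gt ∧ (∫ x in D, g x * b x) < ∫ x in D, gt x * b x := by
  set e := addRight τ
  have hDmeas : MeasurableSet D := hD.measurableSet
  have hΓD : Γ ⊆ D := fun x hx => (hΓsub hx).1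
  have heΓD : e '' Γ ⊆ D := fun x hx => (hτ hx).1
  have hdisj : Disjoint Γ (e '' Γ) := Set.disjoint_left.2 fun x hx hx' => (hΓsub hx).2 (hτ hx')
  have hgap : ∀ x ∈ Γ, b x < b (e x) := fun x hx =>
    (not_lt.1 fun h => (hΓsub hx).2 ⟨hΓD hx, h⟩).trans_lt (hτ ⟨x, hx, rfl⟩).2
  have he : MeasurePreserving e volume volume := measurePreserving_add_right volume τ
  have hσ :
      MeasurePreserving (swapImageEquiv hΓmeas hdisj) (volume.restrict D) (volume.restrict D) :=
    measurePreserving_swapImage_restrict hΓmeas hdisj he hDmeas hΓD heΓD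
  have hgt_ae : gt =ᵐ[volume.restrict D] g ∘ swapImage e Γ :=
    hgt ▸ ae_restrict_of_ae (ae_eq_comp_swapImage_addRight hΓmeas hgz)
  have : IsFiniteMeasure (volume.restrict D) := isFiniteMeasure_restrict.2 hD.measure_lt_top.ne
  obtain ⟨C, hC⟩ := hD.exists_bound_of_continuousOn hb
  refine ⟨(hg.comp_measurePreserving hDmeas hσ).congr_ae hDmeas hgt_ae.symm, ?_⟩
  refine (setIntegral_mul_lt_setIntegral_comp_swapImage_mul hΓmeas hdisj he hDmeas hΓD heΓD hgz
    (hg.1.integrable one_le_two)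
    (memLp_top_of_bound (hb.aestronglyMeasurable hDmeas) C ((ae_restrict_mem hDmeas).mono hC))
    (ae_restrict_of_ae_restrict_of_subset hΓD hg.2.2.1) hgint hgap).trans_eq
    (integral_congr_ae (hgt_ae.mul (ae_eq_refl b))).symm

/-- Translating the mass of a feasible `g` from a positive-measure set `Γ̃ ⊆ D∖B`
(where `∫_{Γ̃} g dμ > 0`) onto `Γ̃ + τ ⊆ B` (where `g = 0` μ-a.e.) produces a feasible
`g̃` with a strictly larger objective value. -/
theorem translate_increases_objective (D : Set ℝ) (hD : IsCompact D) (m : ℝ) (b : ℝ → ℝ)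
    (hm : 0 < m) (hmD : ENNReal.ofReal m < volume D) (hDfin : volume D < ⊤)
    (hb : ContinuousOn b D)
    (hbpos : ∀ᵐ x ∂(volume.restrict D), 0 ≤ b x)
    (k : ℝ) (hk : 0 ≤ k)
    (hkm : volume (Bf D b k) = volume D - ENNReal.ofReal m)
    (g : ℝ → ℝ) (hg : FeasibleF D m g)
    (Γ : Set ℝ) (hΓmeas : MeasurableSet Γ) (hΓsub : Γ ⊆ D \ Bf D b k)
    (hΓpos : 0 < volume Γ)
    (hgint : 0 < ∫ x in Γ, g x)
    (τ : ℝ) (hτ : (fun x => x + τ) '' Γ ⊆ Bf D b k)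
    (hgz : ∀ᵐ x ∂(volume.restrict ((fun x => x + τ) '' Γ)), g x = 0)
    (gt : ℝ → ℝ)
    (hgt : gt = fun x => if x ∈ Γ then 0
      else if x ∈ (fun y => y + τ) '' Γ then g (x - τ) else g x) :
    FeasibleF D m gt ∧ (∫ x in D, g x * b x) < ∫ x in D, gt x * b x :=
  translate_increases_objective_general D hD m b hb k g hg Γ hΓmeas hΓsub hgint τ hτ hgz gt hgt
end
end

section
/- Let U, V ⊆ B be disjoint measurable sets with μ(U) > 0 and μ(V) > 0, and let f, h : D → ℝ be bounded measurable functions with f > 0 μ-a.e. on U, h > 0 μ-a.e. on V, and h ≤ w* μ-a.e. on V. Define g = w* + f·1_U − h·1_V. If ‖g‖_{L²(D)} ≤ 1, then ∫_D g b dμ < ∫_D w* b dμ = ‖b‖_{L²(B)}. -/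
/-!
Since `b = ‖b‖_{L²(B)} w*` on `B` and `g` vanishes off `B`, both objectives are inner products
with `w*`: `∫ g b = ‖b‖ ⟨g, w*⟩` and `∫ w* b = ‖b‖ ‖w*‖² = ‖b‖`. Expanding
`0 < ‖g - w*‖² = ‖g‖² - 2 ⟨g, w*⟩ + ‖w*‖² ≤ 2 - 2 ⟨g, w*⟩` gives `⟨g, w*⟩ < 1`; the left
inequality holds because `g - w* = f > 0` on `U`, which has positive measure.
-/

open MeasureTheory
open scoped ENNReal

noncomputable section

/-- The candidate optimal weighting function `w*(x) = (b(x)/‖b‖_{L²(B)}) 1_B(x)`. -/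
def wstarF (D : Set ℝ) (b : ℝ → ℝ) (k : ℝ) : ℝ → ℝ :=
  (Bf D b k).indicator fun x => b x / Real.sqrt (∫ y in Bf D b k, (b y) ^ 2)

section L2

variable {α : Type*} [MeasurableSpace α] {μ : Measure α}

theorem integral_mul_lt_one_of_integral_sq_sub_pos {u v : α → ℝ} (hu : MemLp u 2 μ)
    (hv : MemLp v 2 μ) (hu1 : ∫ x, u x ^ 2 ∂μ ≤ 1) (hv1 : ∫ x, v x ^ 2 ∂μ = 1)
    (hne : 0 < ∫ x, (u x - v x) ^ 2 ∂μ) : ∫ x, u x * v x ∂μ < 1 := by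
  have huv : Integrable (fun x => u x * v x) μ := hu.integrable_mul hv
  have hexpand : ∫ x, (u x - v x) ^ 2 ∂μ
      = ∫ x, u x ^ 2 ∂μ - 2 * ∫ x, u x * v x ∂μ + ∫ x, v x ^ 2 ∂μ := by
    have hpt : ∀ x, (u x - v x) ^ 2 = u x ^ 2 - 2 * (u x * v x) + v x ^ 2 := fun x => by ring
    have hcross : Integrable (fun x => u x ^ 2 - 2 * (u x * v x)) μ :=
      hu.integrable_sq.sub (huv.const_mul 2)
    simp only [hpt]
    rw [integral_add hcross hv.integrable_sq, integral_sub hu.integrable_sq (huv.const_mul 2),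
      integral_const_mul]
  linarith

theorem setIntegral_sq_pos {φ : α → ℝ} {s t : Set α}
    (hφ : IntegrableOn (fun x => φ x ^ 2) t μ) (hst : s ⊆ t) (hs : μ s ≠ 0)
    (hφs : ∀ᵐ x ∂μ.restrict s, φ x ≠ 0) : 0 < ∫ x in t, φ x ^ 2 ∂μ := by
  have hsupp : Function.support (fun x => φ x ^ 2) =ᵐ[μ.restrict s] (Set.univ : Set α) := by
    filter_upwards [hφs] with x hx
    exact eq_true (pow_ne_zero 2 hx)
  calc 0 < ∫ x in s, φ x ^ 2 ∂μ := by
        rw [integral_pos_iff_support_of_nonneg_ae (ae_of_all _ fun x => sq_nonneg _)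
          (hφ.mono_set hst), measure_congr hsupp, Measure.restrict_apply_univ]
        exact pos_iff_ne_zero.mpr hs
    _ ≤ ∫ x in t, φ x ^ 2 ∂μ :=
        setIntegral_mono_set hφ (ae_of_all _ fun x => sq_nonneg _) hst.eventuallyLE

theorem memLp_of_abs_le [IsFiniteMeasure μ] {φ : α → ℝ} (hφ : Measurable φ)
    (hC : ∃ C, ∀ x, |φ x| ≤ C) (p : ℝ≥0∞) : MemLp φ p μ :=
  let ⟨C, hC⟩ := hC
  MemLp.of_bound hφ.aestronglyMeasurable C (ae_of_all _ hC)

end L2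

theorem ContinuousOn.measurableSet_sep_lt {α : Type*} [TopologicalSpace α] [MeasurableSpace α]
    [OpensMeasurableSpace α] {D : Set α} {b : α → ℝ} (hb : ContinuousOn b D)
    (hD : MeasurableSet D) (k : ℝ) : MeasurableSet {x ∈ D | k < b x} := by
  obtain ⟨u, hu, hpre⟩ := continuousOn_iff'.mp hb (Set.Ioi k) isOpen_Ioi
  have : {x ∈ D | k < b x} = u ∩ D := by
    rw [← hpre, Set.inter_comm]; rfl
  exact this ▸ hu.measurableSet.inter hD

section WStar

variable {D : Set ℝ} {b : ℝ → ℝ} {k : ℝ}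

lemma Bf_subset : Bf D b k ⊆ D := Set.sep_subset _ _

lemma mul_eq_sqrt_mul_wstarF {g : ℝ → ℝ} (hg : ∀ x ∉ Bf D b k, g x = 0)
    (hS : Real.sqrt (∫ y in Bf D b k, (b y) ^ 2) ≠ 0) (x : ℝ) :
    g x * b x = Real.sqrt (∫ y in Bf D b k, (b y) ^ 2) * (g x * wstarF D b k x) := by
  by_cases hx : x ∈ Bf D b k
  · simp only [wstarF, Set.indicator_of_mem hx]
    field_simp
  · simp [hg x hx]

lemma integral_wstarF_sq (hB : MeasurableSet (Bf D b k))
    (hS : 0 < Real.sqrt (∫ y in Bf D b k, (b y) ^ 2)) :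
    ∫ x in D, wstarF D b k x ^ 2 = 1 := by
  set S := Real.sqrt (∫ y in Bf D b k, (b y) ^ 2)
  have hpt : ∀ x, wstarF D b k x ^ 2 = (Bf D b k).indicator (fun y => b y ^ 2 / S ^ 2) x := by
    intro x
    by_cases hx : x ∈ Bf D b k <;> simp [wstarF, hx, S, div_pow]
  simp only [hpt]
  rw [setIntegral_indicator hB, Set.inter_eq_self_of_subset_right Bf_subset, integral_div,
    Real.sq_sqrt (Real.sqrt_pos.mp hS).le, div_self (Real.sqrt_pos.mp hS).ne']

lemma memLp_wstarF (hD : IsCompact D) (hb : ContinuousOn b D) :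
    MemLp (wstarF D b k) 2 (volume.restrict D) := by
  have : IsFiniteMeasure (volume.restrict D) := isFiniteMeasure_restrict.mpr hD.measure_lt_top.ne
  obtain ⟨M, hM⟩ := hD.exists_bound_of_continuousOn hb
  refine MemLp.of_bound (((hb.div_const _).aestronglyMeasurable hD.measurableSet).indicator
    (hb.measurableSet_sep_lt hD.measurableSet k)) (M / ‖Real.sqrt (∫ y in Bf D b k, (b y) ^ 2)‖)
    (ae_restrict_of_forall_mem hD.measurableSet fun x hx => ?_)
  calc ‖wstarF D b k x‖ ≤ ‖b x / Real.sqrt (∫ y in Bf D b k, (b y) ^ 2)‖ :=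
        norm_indicator_le_norm_self _ _
    _ ≤ _ := by
        rw [norm_div]
        exact div_le_div_of_nonneg_right (hM x hx) (norm_nonneg _)

end WStar

theorem perturbation_decreases_objective_general (D : Set ℝ) (hD : IsCompact D)
    (b : ℝ → ℝ)
    (hb : ContinuousOn b D)
    (k : ℝ)
    (hb2 : 0 < Real.sqrt (∫ y in Bf D b k, (b y) ^ 2))
    (U V : Set ℝ) (hUmeas : MeasurableSet U) (hVmeas : MeasurableSet V)
    (hUB : U ⊆ Bf D b k) (hVB : V ⊆ Bf D b k) (hUV : Disjoint U V)
    (hUpos : 0 < volume U)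
    (f h : ℝ → ℝ) (hfmeas : Measurable f) (hhmeas : Measurable h)
    (hfbd : ∃ C, ∀ x, |f x| ≤ C) (hhbd : ∃ C, ∀ x, |h x| ≤ C)
    (hfpos : ∀ᵐ x ∂(volume.restrict U), 0 < f x)
    (g : ℝ → ℝ)
    (hg : g = fun x => wstarF D b k x + Set.indicator U f x - Set.indicator V h x)
    (hgnorm : (∫ x in D, (g x) ^ 2) ≤ 1) :
    (∫ x in D, g x * b x) < ∫ x in D, wstarF D b k x * b x ∧
    (∫ x in D, wstarF D b k x * b x) = Real.sqrt (∫ y in Bf D b k, (b y) ^ 2) := by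
  have hB : MeasurableSet (Bf D b k) := hb.measurableSet_sep_lt hD.measurableSet k
  have : IsFiniteMeasure (volume.restrict D) := isFiniteMeasure_restrict.mpr hD.measure_lt_top.ne
  have hw : MemLp (wstarF D b k) 2 (volume.restrict D) := memLp_wstarF hD hb
  have hgL2 : MemLp g 2 (volume.restrict D) := hg ▸
    (hw.add ((memLp_of_abs_le hfmeas hfbd 2).indicator hUmeas)).sub
      ((memLp_of_abs_le hhmeas hhbd 2).indicator hVmeas)
  have hw0 : ∀ x ∉ Bf D b k, wstarF D b k x = 0 := fun x hx => Set.indicator_of_notMem hx _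
  have hg0 : ∀ x ∉ Bf D b k, g x = 0 := fun x hx => by
    have hxU : x ∉ U := fun hU => hx (hUB hU)
    have hxV : x ∉ V := fun hV => hx (hVB hV)
    simp [hg, hw0 x hx, hxU, hxV]
  have hgw : ∀ x ∈ U, g x - wstarF D b k x = f x := fun x hx => by
    simp [hg, hx, Set.disjoint_left.mp hUV hx]
  have hpos : 0 < ∫ x in D, (g x - wstarF D b k x) ^ 2 := by
    refine setIntegral_sq_pos (hgL2.sub hw).integrable_sq (hUB.trans Bf_subset) hUpos.ne' ?_
    filter_upwards [hfpos, ae_restrict_mem hUmeas] with x hfx hxU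
    exact hgw x hxU ▸ hfx.ne'
  have hlt : ∫ x in D, g x * wstarF D b k x < 1 :=
    integral_mul_lt_one_of_integral_sq_sub_pos hgL2 hw hgnorm (integral_wstarF_sq hB hb2) hpos
  have hwb : ∫ x in D, wstarF D b k x * b x = Real.sqrt (∫ y in Bf D b k, (b y) ^ 2) := by
    simp only [mul_eq_sqrt_mul_wstarF hw0 hb2.ne',
      integral_const_mul, ← sq, integral_wstarF_sq hB hb2, mul_one]
  refine ⟨?_, hwb⟩
  rw [hwb]
  simp only [mul_eq_sqrt_mul_wstarF hg0 hb2.ne', integral_const_mul]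
  exact mul_lt_of_lt_one_right hb2 hlt

/-- Perturbing `w*` by adding `f·1_U` and subtracting `h·1_V` on disjoint
positive-measure subsets `U, V ⊆ B` (with `f > 0` a.e. on `U`, `0 < h ≤ w*` a.e. on `V`)
while keeping `‖g‖_{L²(D)} ≤ 1` strictly decreases the objective:
`∫_D g b dμ < ∫_D w* b dμ = ‖b‖_{L²(B)}`. -/
theorem perturbation_decreases_objective (D : Set ℝ) (hD : IsCompact D)
    (m : ℝ) (b : ℝ → ℝ)
    (hm : 0 < m) (hmD : ENNReal.ofReal m < volume D) (hDfin : volume D < ⊤)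
    (hb : ContinuousOn b D)
    (hbpos : ∀ᵐ x ∂(volume.restrict D), 0 ≤ b x)
    (k : ℝ) (hk : 0 ≤ k)
    (hkm : volume (Bf D b k) = volume D - ENNReal.ofReal m)
    (hb2 : 0 < Real.sqrt (∫ y in Bf D b k, (b y) ^ 2))
    (U V : Set ℝ) (hUmeas : MeasurableSet U) (hVmeas : MeasurableSet V)
    (hUB : U ⊆ Bf D b k) (hVB : V ⊆ Bf D b k) (hUV : Disjoint U V)
    (hUpos : 0 < volume U) (hVpos : 0 < volume V)
    (f h : ℝ → ℝ) (hfmeas : Measurable f) (hhmeas : Measurable h)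
    (hfbd : ∃ C, ∀ x, |f x| ≤ C) (hhbd : ∃ C, ∀ x, |h x| ≤ C)
    (hfpos : ∀ᵐ x ∂(volume.restrict U), 0 < f x)
    (hhpos : ∀ᵐ x ∂(volume.restrict V), 0 < h x)
    (hhle : ∀ᵐ x ∂(volume.restrict V), h x ≤ wstarF D b k x)
    (g : ℝ → ℝ)
    (hg : g = fun x => wstarF D b k x + Set.indicator U f x - Set.indicator V h x)
    (hgnorm : (∫ x in D, (g x) ^ 2) ≤ 1) :
    (∫ x in D, g x * b x) < ∫ x in D, wstarF D b k x * b x ∧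
    (∫ x in D, wstarF D b k x * b x) = Real.sqrt (∫ y in Bf D b k, (b y) ^ 2) :=
  perturbation_decreases_objective_general D hD b hb k hb2 U V hUmeas hVmeas hUB hVB hUV hUpos f h
    hfmeas hhmeas hfbd hhbd hfpos g hg hgnorm
end
end
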